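/- For every odd integer m ≥ 11 there exists a decentralized linear code of length ℓ = 4 for parameters (m, s = m − 3) that is both correct and secure. -/

import Mathlib

namespace SDPicod

/-- Side information set of user `i`: the `s` cyclically consecutive message
indices ending at `i`, i.e. `{i - k : k ∈ Finset.range s}`. -/
def sideInfo (m s : ℕ) (i : ZMod m) : Set (ZMod m) :=
  {j | ∃ k ∈ Finset.range s, j = i - (k : ZMod m)}

/-- A decentralized linear code: every row is encodable by some user, i.e.
its support is contained in that user's side information set. -/
def IsDecentralizedCode (m s : ℕ) {ℓ : ℕ} (G : Fin ℓ → ZMod m → ZMod 2) : Prop :=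
  ∀ t : Fin ℓ, ∃ i : ZMod m, Function.support (G t) ⊆ sideInfo m s i

/-- The set of message indices user `i` can decode: indices `j` outside the
side information set such that the standard basis vector `e j` lies in the
`GF(2)`-span of the rows of `G` together with the basis vectors of the
side information set. -/
def decSet (m s : ℕ) {ℓ : ℕ} (G : Fin ℓ → ZMod m → ZMod 2) (i : ZMod m) :
    Set (ZMod m) :=
  {j | j ∉ sideInfo m s i ∧
    Pi.single j (1 : ZMod 2) ∈ Submodule.span (ZMod 2)
      (Set.range G ∪ {v | ∃ k ∈ sideInfo m s i, v = Pi.single k (1 : ZMod 2)})}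

/-- Correctness: every user can decode at least one new message. -/
def Correct (m s : ℕ) {ℓ : ℕ} (G : Fin ℓ → ZMod m → ZMod 2) : Prop :=
  ∀ i : ZMod m, (decSet m s G i).Nonempty

/-- Security: no user can decode more than one new message. -/
def Secure (m s : ℕ) {ℓ : ℕ} (G : Fin ℓ → ZMod m → ZMod 2) : Prop :=
  ∀ i : ZMod m, (decSet m s G i).Subsingleton

end SDPicod

open SDPicod

/-
For `s = m - 3` user `i` lacks exactly the window `i + 1, i + 2, i + 3`, and what it decodes
depends only on the rows restricted to that window. Take row `t` to be the indicator of the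
colour class `t` of a colouring `c : ZMod m → Fin 4`. The restricted rows span exactly the
functions on the window that are constant on its colour classes, so user `i` decodes precisely
the window positions whose colour occurs only once in the window. It therefore suffices that
every window shows exactly one colour twice and another once, and that every colour misses some
window. For `m = 2n + 1` split `ZMod m` into the block `{0}` and the pairs `{2q - 1, 2q}`,
colour adjacent blocks differently and the last pair like the first; the one-off colours `2`
and `3` on pairs 2 and 3 absorb the parity of the alternating tail.
-/

namespace SDPicod

variable {α ι : Type*} {m n ℓ : ℕ}

theorem mem_span_single_one_iff_support_subset {R : Type*} [Semiring R] [Finite α]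
    [DecidableEq α] {v : α → R} {A : Set α} :
    v ∈ Submodule.span R {w | ∃ k ∈ A, w = Pi.single k 1} ↔ Function.support v ⊆ A := by
  have : {w | ∃ k ∈ A, w = Pi.single k (1 : R)} = Pi.basisFun R α '' A := by
    ext w; simp [eq_comm]
  rw [this, Module.Basis.mem_span_image]
  simp [Set.subset_def]

def colourCode (R : Type*) [Zero R] [One R] [DecidableEq ι] (c : α → ι) (t : ι) (a : α) : R :=
  if c a = t then 1 else 0

theorem single_mem_span_colourCode_iff {R : Type*} [Ring R] [Nontrivial R] [DecidableEq α]
    [DecidableEq ι]     (c : α → ι) (d : α) :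
    Pi.single d 1 ∈ Submodule.span R (Set.range (colourCode R c)) ↔
      ∀ e, c e = c d → e = d := by
  constructor
  · intro h e hed
    by_contra hne
    let φ : (α → R) →ₗ[R] R := LinearMap.proj (R := R) (φ := fun _ => R) e - LinearMap.proj d
    have hle : Submodule.span R (Set.range (colourCode R c)) ≤ LinearMap.ker φ := by
      rw [Submodule.span_le]
      rintro _ ⟨t, rfl⟩
      simp [φ, colourCode, hed]
    have := LinearMap.mem_ker.mp (hle h)
    simp [φ, hne] at this
  · intro h
    refine Submodule.subset_span ⟨c d, funext fun e => ?_⟩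
    by_cases he : e = d
    · simp [colourCode, he]
    · simp [colourCode, he, mt (h e) he]

theorem existsUnique_isolated_of_two_eq (f : Fin 3 → ι)
    (h : f 0 = f 1 ∧ f 1 ≠ f 2 ∨ f 1 = f 2 ∧ f 0 ≠ f 1 ∨ f 0 = f 2 ∧ f 0 ≠ f 1) :
    ∃! d, ∀ e, f e = f d → e = d := by
  rcases h with ⟨h1, h2⟩ | ⟨h1, h2⟩ | ⟨h1, h2⟩
  · refine ⟨2, ?_, ?_⟩ <;> simp only [Fin.forall_fin_succ] <;> grind
  · refine ⟨0, ?_, ?_⟩ <;> simp only [Fin.forall_fin_succ] <;> grind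
  · refine ⟨1, ?_, ?_⟩ <;> simp only [Fin.forall_fin_succ] <;> grind

theorem mem_sideInfo_iff [NeZero m] {s : ℕ} {i j : ZMod m} :
    j ∈ sideInfo m s i ↔ (i - j).val < s := by
  constructor
  · rintro ⟨k, hk, rfl⟩
    rw [sub_sub_cancel, ZMod.val_natCast]
    exact (Nat.mod_le k m).trans_lt (Finset.mem_range.mp hk)
  · intro h
    exact ⟨(i - j).val, Finset.mem_range.mpr h, by rw [ZMod.natCast_zmod_val, sub_sub_cancel]⟩

def window (i : ZMod m) (d : Fin 3) : ZMod m := i + ((d + 1 : ℕ) : ZMod m)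

theorem val_window [NeZero m] (i : ZMod m) (d : Fin 3) :
    (window i d).val = (i.val + d + 1) % m := by
  rw [window, ZMod.val_add, ZMod.val_natCast, Nat.add_mod_mod, add_assoc]

theorem window_injective (hm : 4 ≤ m) (i : ZMod m) : Function.Injective (window i) := by
  intro d e h
  have := d.isLt
  have := e.isLt
  have := congrArg ZMod.val (add_left_cancel h)
  rw [ZMod.val_natCast, ZMod.val_natCast, Nat.mod_eq_of_lt (by omega),
    Nat.mod_eq_of_lt (by omega)] at this
  exact Fin.ext (by omega)

theorem notMem_sideInfo_iff (hm : 4 ≤ m) {i j : ZMod m} :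
    j ∉ sideInfo m (m - 3) i ↔ ∃ d, window i d = j := by
  have : NeZero m := ⟨by omega⟩
  rw [mem_sideInfo_iff, not_lt, ← neg_sub, ZMod.neg_val]
  constructor
  · intro h
    have hc : j - i ≠ 0 := fun h0 => by rw [if_pos h0] at h; omega
    rw [if_neg hc] at h
    have hpos : (j - i).val ≠ 0 := (ZMod.val_ne_zero _).mpr hc
    refine ⟨⟨(j - i).val - 1, by omega⟩, ?_⟩
    rw [window, Nat.sub_add_cancel (Nat.pos_of_ne_zero hpos), ZMod.natCast_zmod_val,
      add_sub_cancel]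
  · rintro ⟨d, rfl⟩
    have hval : ((d + 1 : ℕ) : ZMod m).val = d + 1 := by
      rw [ZMod.val_natCast, Nat.mod_eq_of_lt (by omega)]
    rw [window, add_sub_cancel_left, if_neg, hval]
    · omega
    · intro h0; simp [h0] at hval

theorem support_subset_sideInfo_iff {M : Type*} [Zero M] (hm : 4 ≤ m) {i : ZMod m}
    {v : ZMod m → M} : Function.support v ⊆ sideInfo m (m - 3) i ↔ ∀ d, v (window i d) = 0 := by
  simp only [Function.support_subset_iff', notMem_sideInfo_iff hm, forall_exists_index,
    forall_apply_eq_imp_iff]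

theorem mem_decSet_iff (hm : 4 ≤ m) {ℓ : ℕ} (G : Fin ℓ → ZMod m → ZMod 2) (i j : ZMod m) :
    j ∈ decSet m (m - 3) G i ↔ ∃ d, window i d = j ∧
      Pi.single d 1 ∈ Submodule.span (ZMod 2) (Set.range fun t => G t ∘ window i) := by
  have : NeZero m := ⟨by omega⟩
  let r := LinearMap.funLeft (ZMod 2) (ZMod 2) (window i)
  have hker : Submodule.span (ZMod 2)
      {v | ∃ k ∈ sideInfo m (m - 3) i, v = Pi.single k (1 : ZMod 2)} = LinearMap.ker r := by
    ext v
    rw [mem_span_single_one_iff_support_subset, support_subset_sideInfo_iff hm,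
      LinearMap.mem_ker, funext_iff]
    rfl
  have hspan : Submodule.span (ZMod 2)
      (Set.range G ∪ {v | ∃ k ∈ sideInfo m (m - 3) i, v = Pi.single k (1 : ZMod 2)}) =
      (Submodule.span (ZMod 2) (Set.range fun t => G t ∘ window i)).comap r := by
    rw [Submodule.span_union, hker, ← Submodule.comap_map_eq, Submodule.map_span,
      ← Set.range_comp]
    rfl
  simp only [decSet, Set.mem_ofPred_eq, hspan, Submodule.mem_comap, notMem_sideInfo_iff hm]
  have hsingle (d : Fin 3) : r (Pi.single (window i d) 1) = Pi.single d 1 := by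
    ext e
    simp [r, LinearMap.funLeft_apply, Pi.single_apply, (window_injective hm i).eq_iff]
  constructor
  · rintro ⟨⟨d, rfl⟩, h⟩
    exact ⟨d, rfl, hsingle d ▸ h⟩
  · rintro ⟨d, rfl, h⟩
    exact ⟨⟨d, rfl⟩, (hsingle d).symm ▸ h⟩

theorem decSet_colourCode (hm : 4 ≤ m) (c : ZMod m → Fin ℓ) (i : ZMod m) :
    decSet m (m - 3) (colourCode (ZMod 2) c) i =
      window i '' {d | ∀ e, c (window i e) = c (window i d) → e = d} := by
  ext j
  rw [mem_decSet_iff hm]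
  exact exists_congr fun d => and_comm.trans
    (and_congr_left' (single_mem_span_colourCode_iff (c ∘ window i) d))

theorem isDecentralizedCode_colourCode (hm : 4 ≤ m) (c : ZMod m → Fin ℓ)
    (h : ∀ t, ∃ i, ∀ d, c (window i d) ≠ t) :
    IsDecentralizedCode m (m - 3) (colourCode (ZMod 2) c) := fun t =>
  let ⟨i, hi⟩ := h t
  ⟨i, (support_subset_sideInfo_iff hm).mpr fun d => if_neg (hi d)⟩

theorem correct_colourCode (hm : 4 ≤ m) (c : ZMod m → Fin ℓ)
    (h : ∀ i, ∃ d, ∀ e, c (window i e) = c (window i d) → e = d) :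
    Correct m (m - 3) (colourCode (ZMod 2) c) := fun i => by
  rw [decSet_colourCode hm]
  exact Set.Nonempty.image _ (h i)

theorem secure_colourCode (hm : 4 ≤ m) (c : ZMod m → Fin ℓ)
    (h : ∀ i, {d | ∀ e, c (window i e) = c (window i d) → e = d}.Subsingleton) :
    Secure m (m - 3) (colourCode (ZMod 2) c) := fun i => by
  rw [decSet_colourCode hm]
  exact (h i).image _

def colourByBlocks (B : ℕ → ι) (j : ZMod m) : ι := B ((j.val + 1) / 2)

theorem window_blocks {u : ℕ} (hn : 0 < n) (hu : u < 2 * n + 1) :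
    let b : ℕ → ℕ := fun k => ((u + k + 1) % (2 * n + 1) + 1) / 2
    b 0 = b 1 ∧ b 2 = b 1 + 1 ∧ b 1 < n ∨ b 1 = b 2 ∧ b 1 = b 0 + 1 ∧ b 0 < n ∨
      b 0 = n ∧ b 1 = n ∧ b 2 = 0 ∨ b 0 = n ∧ b 1 = 0 ∧ b 2 = 1 := by
  have hmod (p : ℕ) (hp : p < 2 * (2 * n + 1)) :
      p % (2 * n + 1) = if p < 2 * n + 1 then p else p - (2 * n + 1) := by
    split_ifs with h
    · exact Nat.mod_eq_of_lt h
    · rw [Nat.mod_eq_sub_mod (by omega), Nat.mod_eq_of_lt (by omega)]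
  intro b
  simp only [b, hmod (u + 0 + 1) (by omega), hmod (u + 1 + 1) (by omega),
    hmod (u + 2 + 1) (by omega)]
  split_ifs <;> omega

theorem existsUnique_isolated_colourByBlocks {B : ℕ → ι} (hn : 0 < n)
    (hadj : ∀ q < n, B q ≠ B (q + 1)) (hwrap : B n = B 1) (i : ZMod (2 * n + 1)) :
    ∃! d, ∀ e, colourByBlocks B (window i e) = colourByBlocks B (window i d) → e = d := by
  apply existsUnique_isolated_of_two_eq
  have h0 : B n ≠ B 0 := hwrap ▸ (hadj 0 hn).symm
  have hb := window_blocks hn (ZMod.val_lt i)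
  simp only [colourByBlocks, val_window, Fin.val_zero, Fin.val_one, Fin.val_two]
  simp only at hb
  rcases hb with ⟨h01, h12, hlt⟩ | ⟨h12, h01, hlt⟩ |
    ⟨h0', h1', h2'⟩ | ⟨h0', h1', h2'⟩
  · exact Or.inl ⟨congrArg B h01, h12 ▸ hadj _ hlt⟩
  · exact Or.inr (Or.inl ⟨congrArg B h12, h01 ▸ hadj _ hlt⟩)
  · exact Or.inl ⟨by rw [h0', h1'], by rw [h1', h2']; exact h0⟩
  · exact Or.inr (Or.inr ⟨by rw [h0', h2', hwrap], by rw [h0', h1']; exact h0⟩)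

theorem colourByBlocks_window_natCast [NeZero m] (B : ℕ → ι) {a : ℕ}
    (ha : a + 3 < m) (d : Fin 3) :
    colourByBlocks B (window (a : ZMod m) d) = B ((a + d + 2) / 2) := by
  rw [colourByBlocks, val_window, ZMod.val_natCast, Nat.mod_eq_of_lt (show a < m by omega),
    Nat.mod_eq_of_lt (show a + d + 1 < m by omega)]

def blockColour (n q : ℕ) : Fin 4 :=
  if q = 0 then 1 else if q = 1 then 0 else if q = 2 then 2 else if q = 3 then 3
  else if (n - q) % 2 = 0 then 0 else 1

theorem blockColour_ne_succ {q : ℕ} (hq : q < n) : blockColour n q ≠ blockColour n (q + 1) := by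
  unfold blockColour
  split_ifs <;> first | decide | (exfalso; omega)

theorem blockColour_self (hn : 4 ≤ n) : blockColour n n = blockColour n 1 := by
  have : n ≠ 0 ∧ n ≠ 1 ∧ n ≠ 2 ∧ n ≠ 3 := by omega
  simp [blockColour, this]

theorem exists_window_avoiding_blockColour (hn : 4 ≤ n) (t : Fin 4) :
    ∃ i : ZMod (2 * n + 1), ∀ d, colourByBlocks (blockColour n) (window i d) ≠ t := by
  refine ⟨((![2, 0, 4, 0] t : ℕ) : ZMod (2 * n + 1)), fun d => ?_⟩
  rw [colourByBlocks_window_natCast _ (by fin_cases t <;> simp <;> omega)]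
  rcases Nat.mod_two_eq_zero_or_one (n - 4) with h | h <;>
    fin_cases t <;> fin_cases d <;> simp [blockColour, h]

end SDPicod

theorem feasible_s_eq_m_sub_three_odd (m : ℕ) (hm : 11 ≤ m) (hodd : Odd m) :
    ∃ G : Fin 4 → ZMod m → ZMod 2,
      IsDecentralizedCode m (m - 3) G ∧ Correct m (m - 3) G ∧
      Secure m (m - 3) G := by
  obtain ⟨n, rfl⟩ := hodd
  have hn : 4 ≤ n := by omega
  have hm4 : 4 ≤ 2 * n + 1 := by omega
  have hiso := existsUnique_isolated_colourByBlocks (by omega)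
    (fun _ => blockColour_ne_succ) (blockColour_self hn)
  exact ⟨colourCode (ZMod 2) (colourByBlocks (blockColour n)),
    isDecentralizedCode_colourCode hm4 _ (exists_window_avoiding_blockColour hn),
    correct_colourCode hm4 _ fun i => (hiso i).exists,
    secure_colourCode hm4 _ fun i _ hd _ he => (hiso i).unique hd he⟩
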